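/- Let K ⊂ ℝ³ be a centrally symmetric convex body which is strongly convex with smooth boundary (K ∈ 𝒦̂). Then there exists a unique Θ(K) ∈ (0, π) such that ∫₀^{Θ(K)} ∫₀^π ρ_K(P(α,β))³ sin α dα dβ = ∫_{Θ(K)}^{π} ∫₀^π ρ_K(P(α,β))³ sin α dα dβ. Moreover, the function (θ, φ, ψ) ↦ Θ(X(θ)Y(φ)Z(ψ)K) is C^∞ on ℝ³. -/

import Mathlib

open MeasureTheory Real Set
open scoped RealInnerProductSpace

noncomputable section

/-- Euclidean 3-space. -/
abbrev E3 := EuclideanSpace ℝ (Fin 3)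

/-- The point `(a, b, c)` of `ℝ³`. -/
def pt (a b c : ℝ) : E3 := (WithLp.equiv 2 (Fin 3 → ℝ)).symm ![a, b, c]

/-- The polar body `K° = {y : ⟪x, y⟫ ≤ 1 for all x ∈ K}`. -/
def polarBody (K : Set E3) : Set E3 := {y : E3 | ∀ x ∈ K, ⟪x, y⟫ ≤ 1}

/-- The radial function `ρ_K(x) = max {t ≥ 0 : t • x ∈ K}`. -/
def radial (K : Set E3) (x : E3) : ℝ := sSup {t : ℝ | 0 ≤ t ∧ t • x ∈ K}

/-- The spherical parametrization `P(α, β)`. -/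
def sphP (α β : ℝ) : E3 := pt (cos α) (sin α * cos β) (sin α * sin β)

/-- Rotation by angle `θ` about the `x`-axis. -/
def rotX (θ : ℝ) (p : E3) : E3 :=
  pt (p 0) (cos θ * p 1 - sin θ * p 2) (sin θ * p 1 + cos θ * p 2)

/-- Rotation by angle `φ` about the `y`-axis. -/
def rotY (φ : ℝ) (p : E3) : E3 :=
  pt (cos φ * p 0 + sin φ * p 2) (p 1) (-sin φ * p 0 + cos φ * p 2)

/-- Rotation by angle `ψ` about the `z`-axis. -/
def rotZ (ψ : ℝ) (p : E3) : E3 :=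
  pt (cos ψ * p 0 - sin ψ * p 1) (sin ψ * p 0 + cos ψ * p 1) (p 2)

/-- `K ∈ 𝒦̂`: a centrally symmetric convex body in `ℝ³` which is strongly convex with
smooth boundary, i.e. `h_K = gauge²/2` is `C^∞` away from the origin and has positive
definite Hessian at every point of the unit sphere. -/
def IsKhat (K : Set E3) : Prop :=
  IsCompact K ∧ Convex ℝ K ∧ (interior K).Nonempty ∧ K = -K ∧
    ContDiffOn ℝ (⊤ : ℕ∞) (fun x => gauge K x ^ 2 / 2) {0}ᶜ ∧
    ∀ x : E3, ‖x‖ = 1 → ∀ v : E3, v ≠ 0 →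
      0 < fderiv ℝ (fderiv ℝ (fun y => gauge K y ^ 2 / 2)) x v v

/-- `Θ` satisfies the defining property of `Θ(K)`. -/
def ThetaEq (K : Set E3) (Θ : ℝ) : Prop :=
  Θ ∈ Ioo 0 π ∧
    ∫ β in (0:ℝ)..Θ, ∫ α in (0:ℝ)..π, radial K (sphP α β) ^ 3 * sin α
      = ∫ β in Θ..π, ∫ α in (0:ℝ)..π, radial K (sphP α β) ^ 3 * sin α

/-- `Φ` satisfies the defining property of `Φ(K)`. -/
def PhiEq (K : Set E3) (Φ : ℝ) : Prop :=
  Φ ∈ Ioo 0 π ∧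
    ∫ α in (0:ℝ)..Φ, radial K (sphP α 0) ^ 2 = ∫ α in Φ..π, radial K (sphP α 0) ^ 2

/-- `Ψ` satisfies the defining property of `Ψ(K)`, where `Θ = Θ(K)`. -/
def PsiEq (K : Set E3) (Θ Ψ : ℝ) : Prop :=
  Ψ ∈ Ioo 0 π ∧
    ∫ α in (0:ℝ)..Ψ, radial K (sphP α Θ) ^ 2 = ∫ α in Ψ..π, radial K (sphP α Θ) ^ 2

/-- The unitriangular map whose inverse is the matrix `𝒜(K)` (for `Θ = Θ(K)`, `Φ = Φ(K)`,
`Ψ = Ψ(K)`); thus the body `𝒜(K) K` is the preimage `shear Θ Φ Ψ ⁻¹' K`. -/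
def shear (Θ Φ Ψ : ℝ) (p : E3) : E3 :=
  pt (p 0 + p 1 / tan Φ + p 2 / (sin Θ * tan Ψ)) (p 1 + p 2 / tan Θ) (p 2)

/-- `v₁ = vol(L ∩ {x ≥ 0, y ≥ 0, z ≥ 0})`. -/
def vol₁ (L : Set E3) : ℝ := (volume (L ∩ {p : E3 | 0 ≤ p 0 ∧ 0 ≤ p 1 ∧ 0 ≤ p 2})).toReal

/-- `v₂ = vol(L ∩ {x ≤ 0, y ≥ 0, z ≥ 0})`. -/
def vol₂ (L : Set E3) : ℝ := (volume (L ∩ {p : E3 | p 0 ≤ 0 ∧ 0 ≤ p 1 ∧ 0 ≤ p 2})).toReal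

/-- `v₃ = vol(L ∩ {x ≤ 0, y ≤ 0, z ≥ 0})`. -/
def vol₃ (L : Set E3) : ℝ := (volume (L ∩ {p : E3 | p 0 ≤ 0 ∧ p 1 ≤ 0 ∧ 0 ≤ p 2})).toReal

/-- `v₄ = vol(L ∩ {x ≥ 0, y ≤ 0, z ≥ 0})`. -/
def vol₄ (L : Set E3) : ℝ := (volume (L ∩ {p : E3 | 0 ≤ p 0 ∧ p 1 ≤ 0 ∧ 0 ≤ p 2})).toReal

/-- `F` applied to the transformed body `L' = 𝒜(K) K`. -/
def Ffun (L : Set E3) : ℝ :=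
  (μH[2] (L ∩ {p : E3 | p 0 = 0 ∧ 0 ≤ p 1 ∧ 0 ≤ p 2})).toReal -
    (μH[2] (L ∩ {p : E3 | p 0 = 0 ∧ p 1 ≤ 0 ∧ 0 ≤ p 2})).toReal

/-- `G = v₁ + v₃ - v₂ - v₄` applied to the transformed body `L' = 𝒜(K) K`. -/
def Gfun (L : Set E3) : ℝ := vol₁ L + vol₃ L - vol₂ L - vol₄ L

/-- `H = v₁ + v₄ - v₂ - v₃` applied to the transformed body `L' = 𝒜(K) K`. -/
def Hfun (L : Set E3) : ℝ := vol₁ L + vol₄ L - vol₂ L - vol₃ L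

/-- Condition (★). -/
def StarCond (K : Set E3) : Prop :=
  volume (K ∩ {p : E3 | 0 ≤ p 0 ∧ 0 ≤ p 1 ∧ 0 ≤ p 2})
      = volume (K ∩ {p : E3 | p 0 ≤ 0 ∧ 0 ≤ p 1 ∧ 0 ≤ p 2}) ∧
    volume (K ∩ {p : E3 | p 0 ≤ 0 ∧ 0 ≤ p 1 ∧ 0 ≤ p 2})
      = volume (K ∩ {p : E3 | p 0 ≤ 0 ∧ p 1 ≤ 0 ∧ 0 ≤ p 2}) ∧
    volume (K ∩ {p : E3 | p 0 ≤ 0 ∧ p 1 ≤ 0 ∧ 0 ≤ p 2})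
      = volume (K ∩ {p : E3 | 0 ≤ p 0 ∧ p 1 ≤ 0 ∧ 0 ≤ p 2}) ∧
    μH[2] (K ∩ {p : E3 | p 0 = 0 ∧ 0 ≤ p 1 ∧ 0 ≤ p 2})
      = μH[2] (K ∩ {p : E3 | p 0 = 0 ∧ p 1 ≤ 0 ∧ 0 ≤ p 2}) ∧
    μH[2] (K ∩ {p : E3 | p 1 = 0 ∧ 0 ≤ p 0 ∧ 0 ≤ p 2})
      = μH[2] (K ∩ {p : E3 | p 1 = 0 ∧ 0 ≤ p 0 ∧ p 2 ≤ 0}) ∧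
    μH[2] (K ∩ {p : E3 | p 2 = 0 ∧ 0 ≤ p 0 ∧ 0 ≤ p 1})
      = μH[2] (K ∩ {p : E3 | p 2 = 0 ∧ p 0 ≤ 0 ∧ 0 ≤ p 1})

/-- The cube `[-1,1]³`. -/
def cube : Set E3 := {x : E3 | ∀ i, x i ∈ Icc (-1:ℝ) 1}

/-- The cross product on `ℝ³`. -/
def cross (a b : E3) : E3 :=
  pt (a 1 * b 2 - a 2 * b 1) (a 2 * b 0 - a 0 * b 2) (a 0 * b 1 - a 1 * b 0)

/-!
The rotated body `rotX θ '' (rotY φ '' (rotZ ψ '' K))` is the preimage `unrotate x ⁻¹' K`, so its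
radial function at `sphP α β` is `(gauge K (unrotate x (sphP α β)))⁻¹`. For `K ∈ 𝒦̂` this is smooth
and positive, hence so is the `β`-density `w x β = ∫₀^π ρ³ sin α dα` as a function of `(x, β)`.
The defect `D x Θ = ∫₀^Θ w x - ∫_Θ^π w x` is then smooth, negative at `0`, positive at `π`, and has
`Θ`-derivative `2 w x Θ > 0`: its zero `Θ(x)` exists and is unique by the intermediate value
theorem, and depends smoothly on `x` by the implicit function theorem.
-/

open scoped ContDiff Topology

@[simp] lemma pt_apply_zero (a b c : ℝ) : pt a b c 0 = a := rfl
@[simp] lemma pt_apply_one (a b c : ℝ) : pt a b c 1 = b := rfl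
@[simp] lemma pt_apply_two (a b c : ℝ) : pt a b c 2 = c := rfl

lemma smul_pt (t a b c : ℝ) : t • pt a b c = pt (t * a) (t * b) (t * c) := by
  ext i; fin_cases i <;> rfl

lemma pt_eta (p : E3) : pt (p 0) (p 1) (p 2) = p := by
  ext i; fin_cases i <;> rfl

lemma sphP_ne_zero (α β : ℝ) : sphP α β ≠ 0 := by
  intro h
  have h0 : cos α = 0 := by simpa [sphP] using congrArg (· 0) h
  have h1 : sin α * cos β = 0 := by simpa [sphP] using congrArg (· 1) h
  have h2 : sin α * sin β = 0 := by simpa [sphP] using congrArg (· 2) h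
  nlinarith [sin_sq_add_cos_sq α, sin_sq_add_cos_sq β]

section Smoothness

variable {G : Type*} [NormedAddCommGroup G] [NormedSpace ℝ G] {n : WithTop ℕ∞}

@[fun_prop]
lemma ContDiff.pt {f g h : G → ℝ} (hf : ContDiff ℝ n f) (hg : ContDiff ℝ n g)
    (hh : ContDiff ℝ n h) : ContDiff ℝ n (fun x => pt (f x) (g x) (h x)) := by
  have hv : ContDiff ℝ n (fun x => ![f x, g x, h x]) := by
    refine contDiff_pi.2 fun i => ?_
    fin_cases i <;> simpa
  exact (PiLp.continuousLinearEquiv 2 ℝ (fun _ : Fin 3 => ℝ)).symm.contDiff.comp hv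

@[fun_prop]
lemma ContDiff.euclidean_apply {v : G → E3} (hv : ContDiff ℝ n v) (i : Fin 3) :
    ContDiff ℝ n (fun x => v x i) :=
  (EuclideanSpace.proj (𝕜 := ℝ) (ι := Fin 3) i).contDiff.comp hv

@[fun_prop]
lemma ContDiff.rotX {t : G → ℝ} {v : G → E3} (ht : ContDiff ℝ n t) (hv : ContDiff ℝ n v) :
    ContDiff ℝ n (fun x => rotX (t x) (v x)) := by
  unfold _root_.rotX; fun_prop

@[fun_prop]
lemma ContDiff.rotY {t : G → ℝ} {v : G → E3} (ht : ContDiff ℝ n t) (hv : ContDiff ℝ n v) :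
    ContDiff ℝ n (fun x => rotY (t x) (v x)) := by
  unfold _root_.rotY; fun_prop

@[fun_prop]
lemma ContDiff.rotZ {t : G → ℝ} {v : G → E3} (ht : ContDiff ℝ n t) (hv : ContDiff ℝ n v) :
    ContDiff ℝ n (fun x => rotZ (t x) (v x)) := by
  unfold _root_.rotZ; fun_prop

@[fun_prop]
lemma ContDiff.sphP {a b : G → ℝ} (ha : ContDiff ℝ n a) (hb : ContDiff ℝ n b) :
    ContDiff ℝ n (fun x => sphP (a x) (b x)) := by
  unfold _root_.sphP; fun_prop

end Smoothness

section Rotations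

lemma rotX_neg_rotX (θ : ℝ) (p : E3) : rotX (-θ) (rotX θ p) = p := by
  conv_rhs => rw [← pt_eta p]
  simp only [rotX, pt_apply_zero, pt_apply_one, pt_apply_two, cos_neg, sin_neg]
  congr 1 <;> [linear_combination p 1 * sin_sq_add_cos_sq θ;
    linear_combination p 2 * sin_sq_add_cos_sq θ]

lemma rotY_neg_rotY (φ : ℝ) (p : E3) : rotY (-φ) (rotY φ p) = p := by
  conv_rhs => rw [← pt_eta p]
  simp only [rotY, pt_apply_zero, pt_apply_one, pt_apply_two, cos_neg, sin_neg]
  congr 1 <;> [linear_combination p 0 * sin_sq_add_cos_sq φ;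
    linear_combination p 2 * sin_sq_add_cos_sq φ]

lemma rotZ_neg_rotZ (ψ : ℝ) (p : E3) : rotZ (-ψ) (rotZ ψ p) = p := by
  conv_rhs => rw [← pt_eta p]
  simp only [rotZ, pt_apply_zero, pt_apply_one, pt_apply_two, cos_neg, sin_neg]
  congr 1 <;> [linear_combination p 0 * sin_sq_add_cos_sq ψ;
    linear_combination p 1 * sin_sq_add_cos_sq ψ]

lemma rotX_smul (θ t : ℝ) (p : E3) : rotX θ (t • p) = t • rotX θ p := by
  simp only [rotX, smul_pt, PiLp.smul_apply, smul_eq_mul]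
  congr 1 <;> ring

lemma rotY_smul (φ t : ℝ) (p : E3) : rotY φ (t • p) = t • rotY φ p := by
  simp only [rotY, smul_pt, PiLp.smul_apply, smul_eq_mul]
  congr 1 <;> ring

lemma rotZ_smul (ψ t : ℝ) (p : E3) : rotZ ψ (t • p) = t • rotZ ψ p := by
  simp only [rotZ, smul_pt, PiLp.smul_apply, smul_eq_mul]
  congr 1 <;> ring

def unrotate (x : ℝ × ℝ × ℝ) (p : E3) : E3 :=
  rotZ (-x.2.2) (rotY (-x.2.1) (rotX (-x.1) p))

lemma image_rotations_eq_preimage_unrotate (K : Set E3) (x : ℝ × ℝ × ℝ) :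
    rotX x.1 '' (rotY x.2.1 '' (rotZ x.2.2 '' K)) = unrotate x ⁻¹' K := by
  have inv {R : ℝ → E3 → E3} (h : ∀ t p, R (-t) (R t p) = p) (t : ℝ) (s : Set E3) :
      R t '' s = R (-t) ⁻¹' s :=
    congrFun (image_eq_preimage_of_inverse (h t) fun p => by simpa using h (-t) p) s
  rw [inv rotZ_neg_rotZ, inv rotY_neg_rotY, inv rotX_neg_rotX]
  rfl

lemma unrotate_zero : unrotate 0 = id := by
  funext p
  simp [unrotate, rotX, rotY, rotZ, pt_eta]

lemma unrotate_smul (x : ℝ × ℝ × ℝ) (t : ℝ) (p : E3) :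
    unrotate x (t • p) = t • unrotate x p := by
  simp only [unrotate, rotX_smul, rotY_smul, rotZ_smul]

lemma unrotate_injective (x : ℝ × ℝ × ℝ) : Function.Injective (unrotate x) := by
  have inj {R : ℝ → E3 → E3} (h : ∀ t p, R (-t) (R t p) = p) (t : ℝ) :
      Function.Injective (R t) :=
    Function.LeftInverse.injective (h t)
  exact (inj rotZ_neg_rotZ _).comp ((inj rotY_neg_rotY _).comp (inj rotX_neg_rotX _))

lemma unrotate_ne_zero (x : ℝ × ℝ × ℝ) {p : E3} (hp : p ≠ 0) : unrotate x p ≠ 0 := by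
  have h0 : unrotate x 0 = 0 := by simpa using unrotate_smul x 0 0
  exact h0 ▸ (unrotate_injective x).ne hp

@[fun_prop]
lemma ContDiff.unrotate {G : Type*} [NormedAddCommGroup G] [NormedSpace ℝ G] {n : WithTop ℕ∞}
    {x : G → ℝ × ℝ × ℝ} {v : G → E3} (hx : ContDiff ℝ n x) (hv : ContDiff ℝ n v) :
    ContDiff ℝ n (fun y => unrotate (x y) (v y)) := by
  unfold _root_.unrotate; fun_prop

end Rotations

section ImplicitRoot

variable {E : Type*} [NormedAddCommGroup E] [NormedSpace ℝ E] [CompleteSpace E]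
  {n : WithTop ℕ∞} {f : E × ℝ → ℝ} {r : E → ℝ}

lemma contDiff_of_forall_apply_eq_zero (hf : ContDiff ℝ n f) (hn : n ≠ 0)
    (hr : ∀ x, f (x, r x) = 0) (hinj : ∀ x, Function.Injective fun t => f (x, t))
    (hd : ∀ x, deriv (fun t => f (x, t)) (r x) ≠ 0) : ContDiff ℝ n r := by
  refine contDiff_iff_contDiffAt.2 fun x₀ => ?_
  have cdf : ContDiffAt ℝ n f (x₀, r x₀) := hf.contDiffAt
  have hpartial : (fderiv ℝ f (x₀, r x₀) ∘L .inr ℝ E ℝ) 1 = deriv (fun t => f (x₀, t)) (r x₀) :=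
    (((cdf.differentiableAt hn).hasFDerivAt.comp_hasDerivAt (r x₀)
      ((hasDerivAt_const _ x₀).prodMk (hasDerivAt_id _))).deriv).symm
  have hinv : (fderiv ℝ f (x₀, r x₀) ∘L .inr ℝ E ℝ).IsInvertible :=
    ⟨ContinuousLinearEquiv.unitsEquivAut ℝ (Units.mk0 _ (hd x₀)),
      ContinuousLinearMap.ext_ring (by simp [hpartial])⟩
  refine (cdf.contDiffAt_implicitFunction hn hinv).congr_of_eventuallyEq ?_
  filter_upwards [cdf.eventually_apply_implicitFunction hn hinv] with x hx
  exact hinj x ((hr x).trans (hx.trans (hr x₀)).symm)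

end ImplicitRoot

section ParametricIntegral

open intervalIntegral Metric

lemma hasFDerivAt_intervalIntegral_param {E F : Type*} [NormedAddCommGroup E] [NormedSpace ℝ E]
    [ProperSpace E] [NormedAddCommGroup F] [NormedSpace ℝ F] {f : E × ℝ → F}
    (hf : ContDiff ℝ 1 f) (a b : ℝ) (x₀ : E) :
    HasFDerivAt (fun x => ∫ t in a..b, f (x, t))
      (∫ t in a..b, fderiv ℝ f (x₀, t) ∘L .inl ℝ E ℝ) x₀ := by
  set D : E × ℝ → E →L[ℝ] F := fun z => fderiv ℝ f z ∘L .inl ℝ E ℝ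
  have hD : Continuous D :=
    ((ContinuousLinearMap.compL ℝ E (E × ℝ) F).flip (.inl ℝ E ℝ)).continuous.comp
      (hf.continuous_fderiv one_ne_zero)
  have hpartial (x : E) (t : ℝ) : HasFDerivAt (fun y => f (y, t)) (D (x, t)) x :=
    (hf.differentiable one_ne_zero (x, t)).hasFDerivAt.comp x (hasFDerivAt_prodMk_left x t)
  have hslice (x : E) : Continuous fun t => f (x, t) := hf.continuous.comp (by fun_prop)
  obtain ⟨C, hC⟩ := ((isCompact_closedBall x₀ 1).prod isCompact_uIcc).exists_bound_of_continuousOn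
    (hD.continuousOn (s := closedBall x₀ 1 ×ˢ uIcc a b))
  refine hasFDerivAt_integral_of_dominated_of_fderiv_le (F' := fun x t => D (x, t))
    (bound := fun _ => C) (ball_mem_nhds x₀ one_pos)
    (.of_forall fun x => (hslice x).aestronglyMeasurable) ((hslice x₀).intervalIntegrable a b)
    (hD.comp (by fun_prop)).aestronglyMeasurable ?_ intervalIntegrable_const
    (.of_forall fun t _ x _ => hpartial x t)
  exact .of_forall fun t ht x hx => hC (x, t) ⟨ball_subset_closedBall hx, uIoc_subset_uIcc ht⟩

universe u

/- Differentiating under the integral sign turns `f` into `∂ₓf : E × ℝ → (E →L[ℝ] F)`, so the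
induction runs over all targets `F` in the universe of `E`. -/
lemma contDiff_nat_intervalIntegral_param {E : Type u} [NormedAddCommGroup E]
    [NormedSpace ℝ E] [ProperSpace E] (a b : ℝ) (k : ℕ) :
    ∀ {F : Type u} [NormedAddCommGroup F] [NormedSpace ℝ F] {f : E × ℝ → F},
      ContDiff ℝ ∞ f → ContDiff ℝ k (fun x => ∫ t in a..b, f (x, t)) := by
  induction k with
  | zero =>
    intro F _ _ f hf
    exact contDiff_zero.2 (continuous_parametric_intervalIntegral_of_continuous'
      (f := fun x t => f (x, t)) hf.continuous a b)
  | succ k ih =>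
    intro F _ _ f hf
    have hderiv := hasFDerivAt_intervalIntegral_param (hf.of_le (by simp)) a b
    rw [Nat.cast_succ]
    refine contDiff_succ_iff_fderiv.2 ⟨fun x => (hderiv x).differentiableAt, by simp, ?_⟩
    rw [funext fun x => (hderiv x).fderiv]
    exact ih (((ContinuousLinearMap.compL ℝ E (E × ℝ) F).flip (.inl ℝ E ℝ)).contDiff.comp
      (contDiff_infty_iff_fderiv.1 hf).2)

lemma contDiff_intervalIntegral_param {E F : Type u} [NormedAddCommGroup E] [NormedSpace ℝ E]
    [ProperSpace E] [NormedAddCommGroup F] [NormedSpace ℝ F] {f : E × ℝ → F}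
    (hf : ContDiff ℝ ∞ f) (a b : ℝ) : ContDiff ℝ ∞ (fun x => ∫ t in a..b, f (x, t)) :=
  contDiff_infty.2 fun k => contDiff_nat_intervalIntegral_param a b k hf

lemma contDiff_intervalIntegral_param_upper {E F : Type u} [NormedAddCommGroup E]
    [NormedSpace ℝ E] [ProperSpace E] [NormedAddCommGroup F] [NormedSpace ℝ F] {f : E × ℝ → F}
    (hf : ContDiff ℝ ∞ f) (a : ℝ) :
    ContDiff ℝ ∞ (fun w : E × ℝ => ∫ t in a..w.2, f (w.1, t)) := by
  have hrescale (w : E × ℝ) : ∫ t in a..w.2, f (w.1, t)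
      = (w.2 - a) • ∫ s in (0:ℝ)..1, f (w.1, a + (w.2 - a) * s) := by
    simp [smul_integral_comp_add_mul (fun t => f (w.1, t))]
  simp only [hrescale]
  exact (contDiff_snd.sub contDiff_const).smul
    (contDiff_intervalIntegral_param
      (hf.comp (f := fun z : (E × ℝ) × ℝ => (z.1.1, a + (z.1.2 - a) * z.2)) (by fun_prop)) 0 1)

end ParametricIntegral

section Gauge

lemma zero_mem_interior_of_neg_eq {E : Type*} [AddCommGroup E] [Module ℝ E] [TopologicalSpace E]
    [IsTopologicalAddGroup E] [ContinuousSMul ℝ E] {K : Set E} (hv : Convex ℝ K)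
    (hint : (interior K).Nonempty) (hs : K = -K) : (0 : E) ∈ interior K := by
  obtain ⟨x, hx⟩ := hint
  have hx' : -x ∈ interior K :=
    interior_maximal ((neg_subset_neg.2 interior_subset).trans hs.symm.subset) isOpen_interior.neg
      (neg_mem_neg.2 hx)
  simpa using hv.interior hx hx' (by norm_num : (0:ℝ) ≤ 1 / 2) (by norm_num : (0:ℝ) ≤ 1 / 2)
    (by norm_num)

variable {E : Type*} [NormedAddCommGroup E] [NormedSpace ℝ E] {K : Set E}

lemma contDiffAt_inv_gauge {n : WithTop ℕ∞}
    (hK : ContDiffOn ℝ n (fun x => gauge K x ^ 2 / 2) {0}ᶜ) {x : E} (hx : 0 < gauge K x) :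
    ContDiffAt ℝ n (fun y => (gauge K y)⁻¹) x := by
  have hx0 : x ≠ 0 := by rintro rfl; simp at hx
  have hsqrt : (fun y => √(2 * (gauge K y ^ 2 / 2))) = gauge K := by
    funext y
    rw [mul_div_cancel₀ _ two_ne_zero, sqrt_sq (gauge_nonneg y)]
  have hgauge : ContDiffAt ℝ n (gauge K) x := by
    rw [← hsqrt]
    exact (contDiffAt_const.mul (hK.contDiffAt (isOpen_compl_singleton.mem_nhds hx0))).sqrt
      (by positivity)
  exact hgauge.inv hx.ne'

end Gauge

section Radial

variable {K : Set E3}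

lemma radial_preimage {B : E3 → E3} (hB : ∀ (t : ℝ) p, B (t • p) = t • B p) (x : E3) :
    radial (B ⁻¹' K) x = radial K (B x) := by
  simp only [radial, mem_preimage, hB]

lemma radial_eq_inv_gauge (hc : IsClosed K) (hv : Convex ℝ K) (h0 : K ∈ 𝓝 0) {x : E3}
    (hx : 0 < gauge K x) : radial K x = (gauge K x)⁻¹ := by
  have hmem (y : E3) : y ∈ K ↔ gauge K y ≤ 1 := by
    rw [gauge_le_one_iff_mem_closure hv h0, hc.closure_eq]
  have hset : {t : ℝ | 0 ≤ t ∧ t • x ∈ K} = Icc 0 (gauge K x)⁻¹ := by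
    ext t
    simp only [mem_ofPred_eq, mem_Icc, hmem, and_congr_right_iff]
    intro ht
    rw [gauge_smul_of_nonneg ht, smul_eq_mul, inv_eq_one_div, le_div_iff₀ hx]
  rw [radial, hset, csSup_Icc (by positivity)]

end Radial

section EqualSplit

variable {h : ℝ → ℝ}

lemma hasDerivAt_integral_sub_integral (hh : Continuous h) (a b c : ℝ) :
    HasDerivAt (fun u => (∫ t in a..u, h t) - ∫ t in u..b, h t) (2 * h c) c := by
  have hleft := intervalIntegral.integral_hasDerivAt_right (hh.intervalIntegrable a c)
    (hh.stronglyMeasurableAtFilter _ _) hh.continuousAt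
  have hright := intervalIntegral.integral_hasDerivAt_left (hh.intervalIntegrable c b)
    (hh.stronglyMeasurableAtFilter _ _) hh.continuousAt
  exact (hleft.sub hright).congr_deriv (by ring)

lemma integral_sub_integral_eq (hh : Continuous h) (a b c : ℝ) :
    (∫ t in a..c, h t) - ∫ t in c..b, h t = 2 * (∫ t in a..c, h t) - ∫ t in a..b, h t := by
  rw [← intervalIntegral.integral_add_adjacent_intervals (hh.intervalIntegrable a c)
    (hh.intervalIntegrable c b)]
  ring

lemma existsUnique_integral_eq_integral (hh : Continuous h) {a b : ℝ} (hab : a < b)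
    (hpos : ∀ t ∈ Ioo a b, 0 < h t) :
    ∃! c, c ∈ Ioo a b ∧ ∫ t in a..c, h t = ∫ t in c..b, h t := by
  set D := fun c => (∫ t in a..c, h t) - ∫ t in c..b, h t
  have hD := hasDerivAt_integral_sub_integral hh a b
  have hmono : StrictMonoOn D (Icc a b) :=
    strictMonoOn_of_deriv_pos (convex_Icc a b) (fun c _ => (hD c).continuousAt.continuousWithinAt)
      fun c hc => by
        rw [interior_Icc] at hc
        rw [(hD c).deriv]
        linarith [hpos c hc]
  have htotal : 0 < ∫ t in a..b, h t :=
    intervalIntegral.intervalIntegral_pos_of_pos_on (hh.intervalIntegrable a b) hpos hab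
  have hsign : (0 : ℝ) ∈ Ioo (D a) (D b) := by
    simp only [D, intervalIntegral.integral_same]
    constructor <;> linarith
  obtain ⟨c, hc, hDc⟩ := intermediate_value_Ioo hab.le
    (fun c _ => (hD c).continuousAt.continuousWithinAt) hsign
  refine ⟨c, ⟨hc, sub_eq_zero.1 hDc⟩, fun c' ⟨hc', hDc'⟩ => ?_⟩
  exact hmono.injOn (Ioo_subset_Icc_self hc') (Ioo_subset_Icc_self hc)
    ((sub_eq_zero.2 hDc').trans hDc.symm)

end EqualSplit

section Khat

variable {K : Set E3}

lemma IsKhat.mem_nhds_zero (hK : IsKhat K) : K ∈ 𝓝 0 := by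
  obtain ⟨-, hconv, hint, hsymm, -⟩ := hK
  exact mem_interior_iff_mem_nhds.1 (zero_mem_interior_of_neg_eq hconv hint hsymm)

lemma IsKhat.gauge_pos (hK : IsKhat K) {x : E3} (hx : x ≠ 0) : 0 < gauge K x :=
  (_root_.gauge_pos (absorbent_nhds_zero hK.mem_nhds_zero)
    ((NormedSpace.isVonNBounded_iff ℝ).2 hK.1.isBounded)).2 hx

lemma IsKhat.radial_eq_inv_gauge (hK : IsKhat K) {x : E3} (hx : x ≠ 0) :
    radial K x = (gauge K x)⁻¹ :=
  _root_.radial_eq_inv_gauge hK.1.isClosed hK.2.1 hK.mem_nhds_zero (hK.gauge_pos hx)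

lemma IsKhat.contDiffAt_inv_gauge (hK : IsKhat K) {x : E3} (hx : x ≠ 0) :
    ContDiffAt ℝ ∞ (fun y => (gauge K y)⁻¹) x := by
  have hpos := hK.gauge_pos hx
  obtain ⟨-, -, -, -, hsmooth, -⟩ := hK
  exact _root_.contDiffAt_inv_gauge hsmooth hpos

end Khat

def betaDensity (K : Set E3) (x : ℝ × ℝ × ℝ) (β : ℝ) : ℝ :=
  ∫ α in (0:ℝ)..π, radial (unrotate x ⁻¹' K) (sphP α β) ^ 3 * sin α

section Theta

variable {K : Set E3}

lemma IsKhat.radial_unrotate_sphP (hK : IsKhat K) (x : ℝ × ℝ × ℝ) (α β : ℝ) :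
    radial (unrotate x ⁻¹' K) (sphP α β) = (gauge K (unrotate x (sphP α β)))⁻¹ := by
  rw [radial_preimage (unrotate_smul x),
    hK.radial_eq_inv_gauge (unrotate_ne_zero x (sphP_ne_zero α β))]

lemma IsKhat.contDiff_betaDensity_integrand (hK : IsKhat K) :
    ContDiff ℝ ∞ (fun z : ((ℝ × ℝ × ℝ) × ℝ) × ℝ =>
      radial (unrotate z.1.1 ⁻¹' K) (sphP z.2 z.1.2) ^ 3 * sin z.2) := by
  simp only [hK.radial_unrotate_sphP]
  refine contDiff_iff_contDiffAt.2 fun z => ContDiffAt.mul (ContDiffAt.pow ?_ 3) (by fun_prop)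
  exact ContDiffAt.comp (g := fun y => (gauge K y)⁻¹) z
    (hK.contDiffAt_inv_gauge (unrotate_ne_zero _ (sphP_ne_zero _ _)))
    (ContDiff.contDiffAt (by fun_prop))

lemma IsKhat.contDiff_betaDensity (hK : IsKhat K) :
    ContDiff ℝ ∞ (fun w : (ℝ × ℝ × ℝ) × ℝ => betaDensity K w.1 w.2) :=
  contDiff_intervalIntegral_param hK.contDiff_betaDensity_integrand 0 π

lemma IsKhat.continuous_betaDensity (hK : IsKhat K) (x : ℝ × ℝ × ℝ) :
    Continuous (betaDensity K x) :=
  hK.contDiff_betaDensity.continuous.comp₂ continuous_const continuous_id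

lemma IsKhat.betaDensity_pos (hK : IsKhat K) (x : ℝ × ℝ × ℝ) (β : ℝ) : 0 < betaDensity K x β := by
  refine intervalIntegral.intervalIntegral_pos_of_pos_on
    ((hK.contDiff_betaDensity_integrand.continuous.comp (by fun_prop :
      Continuous fun α : ℝ => ((x, β), α))).intervalIntegrable 0 π) (fun α hα => ?_) pi_pos
  have hgauge := hK.gauge_pos (unrotate_ne_zero x (sphP_ne_zero α β))
  have hsin := sin_pos_of_pos_of_lt_pi hα.1 hα.2
  rw [hK.radial_unrotate_sphP]
  positivity

lemma IsKhat.existsUnique_thetaEq_unrotate (hK : IsKhat K) (x : ℝ × ℝ × ℝ) :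
    ∃! Θ, ThetaEq (unrotate x ⁻¹' K) Θ :=
  existsUnique_integral_eq_integral (hK.continuous_betaDensity x) pi_pos
    fun β _ => hK.betaDensity_pos x β

lemma IsKhat.exists_contDiff_thetaEq_unrotate (hK : IsKhat K) :
    ∃ T : ℝ × ℝ × ℝ → ℝ, ContDiff ℝ ∞ T ∧ ∀ x, ThetaEq (unrotate x ⁻¹' K) (T x) := by
  choose T hT _ using hK.existsUnique_thetaEq_unrotate
  refine ⟨T, ?_, hT⟩
  set D : (ℝ × ℝ × ℝ) × ℝ → ℝ :=
    fun w => (∫ β in (0:ℝ)..w.2, betaDensity K w.1 β) - ∫ β in w.2..π, betaDensity K w.1 β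
  have hD : ContDiff ℝ ∞ D := by
    simp only [D, integral_sub_integral_eq (hK.continuous_betaDensity _)]
    exact (contDiff_const.mul (contDiff_intervalIntegral_param_upper hK.contDiff_betaDensity 0)).sub
      ((contDiff_intervalIntegral_param hK.contDiff_betaDensity 0 π).comp contDiff_fst)
  have hDderiv (x : ℝ × ℝ × ℝ) (Θ : ℝ) :
      HasDerivAt (fun Θ => D (x, Θ)) (2 * betaDensity K x Θ) Θ :=
    hasDerivAt_integral_sub_integral (hK.continuous_betaDensity x) 0 π Θ
  have hDderiv_pos (x : ℝ × ℝ × ℝ) (Θ : ℝ) : 0 < 2 * betaDensity K x Θ := by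
    linarith [hK.betaDensity_pos x Θ]
  refine contDiff_of_forall_apply_eq_zero hD (by simp) (fun x => sub_eq_zero.2 (hT x).2)
    (fun x => (strictMono_of_hasDerivAt_pos (hDderiv x) (hDderiv_pos x)).injective) fun x => ?_
  rw [(hDderiv x (T x)).deriv]
  exact (hDderiv_pos x (T x)).ne'

end Theta

/-- Lemma 5.2: for `K ∈ 𝒦̂` there is a unique `Θ(K) ∈ (0, π)` equalizing the two
`β`-integrals, and `(θ, φ, ψ) ↦ Θ(X(θ)Y(φ)Z(ψ)K)` is a `C^∞` function on `ℝ³`. -/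
theorem theta_exists_unique_smooth (K : Set E3) (hK : IsKhat K) :
    (∃! Θ : ℝ, ThetaEq K Θ) ∧
      ∃ T : ℝ → ℝ → ℝ → ℝ,
        ContDiff ℝ (⊤ : ℕ∞) (fun p : ℝ × ℝ × ℝ => T p.1 p.2.1 p.2.2) ∧
        ∀ θ φ ψ : ℝ, ThetaEq (rotX θ '' (rotY φ '' (rotZ ψ '' K))) (T θ φ ψ) := by
  obtain ⟨T, hT, hTeq⟩ := hK.exists_contDiff_thetaEq_unrotate
  refine ⟨?_, fun θ φ ψ => T (θ, φ, ψ), hT, fun θ φ ψ => ?_⟩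
  · simpa [unrotate_zero] using hK.existsUnique_thetaEq_unrotate 0
  · rw [image_rotations_eq_preimage_unrotate K (θ, φ, ψ)]
    exact hTeq _
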